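/- arXiv:2404.07493 — 2 statements merged into one kernel-verified Lean document; each statement's English description precedes it below -/
import Mathlib

section
/- Let P ∈ ℝ^{n×n} be a row-stochastic matrix (all entries nonnegative, each row summing to 1), and let N be a random n×d real matrix whose entries N_{jk} are square-integrable, satisfy E[N_{jk}] = 0 and E[N_{jk}²] = σ², and are pairwise uncorrelated (E[N_{jk} N_{j'k'}] = 0 whenever (j,k) ≠ (j',k')). Then E[‖PN‖_F²] ≤ n·d·σ² = E[‖N‖_F²], where ‖·‖_F denotes the Frobenius norm. -/
open Matrix MeasureTheory BigOperators

/-! Each entry `(P N)ᵢₖ = ∑ⱼ Pᵢⱼ Nⱼₖ` is a combination of uncorrelated variables of second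
moment `σ²`, so its second moment is `(∑ⱼ Pᵢⱼ²) σ²`; for a stochastic row, `∑ⱼ Pᵢⱼ² ≤ ∑ⱼ Pᵢⱼ = 1`. -/

/-- The Frobenius norm of a real matrix. -/
noncomputable def frobNorm {m n : ℕ} (M : Matrix (Fin m) (Fin n) ℝ) : ℝ :=
  Real.sqrt (∑ i, ∑ j, (M i j) ^ 2)

theorem frobNorm_sq {m n : ℕ} (M : Matrix (Fin m) (Fin n) ℝ) :
    frobNorm M ^ 2 = ∑ i, ∑ j, M i j ^ 2 :=
  Real.sq_sqrt <| Finset.sum_nonneg fun _ _ => Finset.sum_nonneg fun _ _ => sq_nonneg _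

theorem sum_sq_le_one_of_nonneg_of_sum_eq_one {ι : Type*} [Fintype ι] {a : ι → ℝ}
    (ha : ∀ i, 0 ≤ a i) (hsum : ∑ i, a i = 1) : ∑ i, a i ^ 2 ≤ 1 := by
  have ha_le_one : ∀ i, a i ≤ 1 := fun i =>
    hsum ▸ Finset.single_le_sum (fun j _ => ha j) (Finset.mem_univ i)
  calc ∑ i, a i ^ 2 ≤ ∑ i, a i :=
        Finset.sum_le_sum fun i _ => by nlinarith [ha i, ha_le_one i]
    _ = 1 := hsum

section Integrals

variable {Ω : Type*} [MeasurableSpace Ω] {μ : Measure Ω}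

theorem integral_frobNorm_sq {m n : ℕ} {M : Ω → Matrix (Fin m) (Fin n) ℝ}
    (hM : ∀ i j, MemLp (fun ω => M ω i j) 2 μ) :
    ∫ ω, frobNorm (M ω) ^ 2 ∂μ = ∑ i, ∑ j, ∫ ω, M ω i j ^ 2 ∂μ := by
  simp only [frobNorm_sq]
  rw [integral_finsetSum _ fun i _ => integrable_finsetSum _ fun j _ => (hM i j).integrable_sq]
  exact Finset.sum_congr rfl fun i _ =>
    integral_finsetSum _ fun j _ => (hM i j).integrable_sq

theorem integral_sq_weighted_sum_of_uncorrelated {ι : Type*} [Fintype ι] {X : ι → Ω → ℝ}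
    {σ : ℝ} (hX : ∀ i, MemLp (X i) 2 μ)
    (huncorr : Pairwise fun i j => ∫ ω, X i ω * X j ω ∂μ = 0)
    (hvar : ∀ i, ∫ ω, X i ω ^ 2 ∂μ = σ ^ 2) (a : ι → ℝ) :
    ∫ ω, (∑ i, a i * X i ω) ^ 2 ∂μ = (∑ i, a i ^ 2) * σ ^ 2 := by
  have hint : ∀ i j, Integrable (fun ω => a i * a j * (X i ω * X j ω)) μ := fun i j =>
    ((hX i).integrable_mul (hX j)).const_mul _
  have hexpand : ∀ ω, (∑ i, a i * X i ω) ^ 2 = ∑ i, ∑ j, a i * a j * (X i ω * X j ω) := by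
    intro ω
    rw [sq, Finset.sum_mul_sum]
    exact Finset.sum_congr rfl fun i _ => Finset.sum_congr rfl fun j _ => by ring
  simp only [hexpand]
  rw [integral_finsetSum _ fun i _ => integrable_finsetSum _ fun j _ => hint i j,
    Finset.sum_mul]
  refine Finset.sum_congr rfl fun i _ => ?_
  rw [integral_finsetSum _ fun j _ => hint i j, Finset.sum_eq_single i]
  · rw [integral_const_mul, ← hvar i]
    simp only [← sq]
  · exact fun j _ hji => by rw [integral_const_mul, huncorr hji.symm, mul_zero]
  · simp

end Integrals

theorem stmt3_general {n d : ℕ} (P : Matrix (Fin n) (Fin n) ℝ)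
    (hpos : ∀ i j, 0 ≤ P i j) (hsum : ∀ i, ∑ j, P i j = 1)
    {Ω : Type*} [MeasurableSpace Ω] (Pr : Measure Ω)
    (N : Ω → Matrix (Fin n) (Fin d) ℝ) (σ : ℝ)
    (hL2 : ∀ j k, MemLp (fun ω => N ω j k) 2 Pr)
    (hvar : ∀ j k, (∫ ω, (N ω j k) ^ 2 ∂Pr) = σ ^ 2)
    (huncorr : ∀ j k j' k', (j, k) ≠ (j', k') →
      (∫ ω, N ω j k * N ω j' k' ∂Pr) = 0) :
    (∫ ω, (frobNorm (P * N ω)) ^ 2 ∂Pr) ≤ (n : ℝ) * d * σ ^ 2 ∧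
      (n : ℝ) * d * σ ^ 2 = ∫ ω, (frobNorm (N ω)) ^ 2 ∂Pr := by
  have hentry : ∀ i k, ∫ ω, (P * N ω) i k ^ 2 ∂Pr = (∑ j, P i j ^ 2) * σ ^ 2 := fun i k =>
    integral_sq_weighted_sum_of_uncorrelated (fun j => hL2 j k)
      (fun j j' hjj' => huncorr j k j' k (by simpa using hjj')) (fun j => hvar j k) (P i)
  have hPN : ∀ i k, MemLp (fun ω => (P * N ω) i k) 2 Pr := fun i k => by
    simpa only [mul_apply] using memLp_finsetSum .univ fun j _ => (hL2 j k).const_mul (P i j)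
  constructor
  · calc ∫ ω, frobNorm (P * N ω) ^ 2 ∂Pr = ∑ i, ∑ k : Fin d, (∑ j, P i j ^ 2) * σ ^ 2 := by
          simp only [integral_frobNorm_sq hPN, hentry]
      _ ≤ ∑ _i : Fin n, ∑ _k : Fin d, 1 * σ ^ 2 := by
          gcongr with i
          exact sum_sq_le_one_of_nonneg_of_sum_eq_one (hpos i) (hsum i)
      _ = n * d * σ ^ 2 := by simp [mul_assoc]
  · simp [integral_frobNorm_sq hL2, hvar, mul_assoc]

/-- Second part of Theorem 2: a row-stochastic filter `P` does not increase the total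
variance of mean-zero, pairwise-uncorrelated noise with entrywise variance `σ²`:
`E[‖P N‖_F²] ≤ n d σ² = E[‖N‖_F²]`. -/
theorem stmt3 {n d : ℕ} (P : Matrix (Fin n) (Fin n) ℝ)
    (hpos : ∀ i j, 0 ≤ P i j) (hsum : ∀ i, ∑ j, P i j = 1)
    {Ω : Type*} [MeasurableSpace Ω] (Pr : Measure Ω) [IsProbabilityMeasure Pr]
    (N : Ω → Matrix (Fin n) (Fin d) ℝ) (σ : ℝ)
    (hL2 : ∀ j k, MemLp (fun ω => N ω j k) 2 Pr)
    (hmean : ∀ j k, (∫ ω, N ω j k ∂Pr) = 0)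
    (hvar : ∀ j k, (∫ ω, (N ω j k) ^ 2 ∂Pr) = σ ^ 2)
    (huncorr : ∀ j k j' k', (j, k) ≠ (j', k') →
      (∫ ω, N ω j k * N ω j' k' ∂Pr) = 0) :
    (∫ ω, (frobNorm (P * N ω)) ^ 2 ∂Pr) ≤ (n : ℝ) * d * σ ^ 2 ∧
      (n : ℝ) * d * σ ^ 2 = ∫ ω, (frobNorm (N ω)) ^ 2 ∂Pr :=
  stmt3_general P hpos hsum Pr N σ hL2 hvar huncorr
end

section
/- Let G be a finite simple graph with adjacency matrix A (over ℝ or ℕ), let e = {i, j} be an edge of G, and let G′ = G with edge e deleted, with adjacency matrix A′. Let K ≥ 1 and let k be a vertex such that every walk in G of length at most K − 1 starting at k ends at a vertex different from both i and j. Then the k-th rows of A^K and (A′)^K coincide: (A^K)_{k,l} = ((A′)^K)_{k,l} for every vertex l. -/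
open Matrix BigOperators

/-- Locality of edge removal: if every walk of length at most `K − 1` in `G` starting
at `k` ends at a vertex different from both endpoints `i, j` of an edge `e`, then the
`k`-th rows of `A^K` and `(A′)^K` coincide, where `A′` is the adjacency matrix of `G`
with the edge `e = {i, j}` deleted. -/
theorem stmt11 {n : ℕ} (G : SimpleGraph (Fin n)) [DecidableRel G.Adj]
    (i j : Fin n) (hadj : G.Adj i j)
    (G' : SimpleGraph (Fin n)) [DecidableRel G'.Adj]
    (hG' : G' = G.deleteEdges {s(i, j)})
    (K : ℕ) (hK : 1 ≤ K) (k : Fin n)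
    (hwalk : ∀ (l : Fin n) (w : G.Walk k l), w.length ≤ K - 1 → l ≠ i ∧ l ≠ j) :
    ∀ l, ((G.adjMatrix ℝ) ^ K) k l = ((G'.adjMatrix ℝ) ^ K) k l := by
  -- zero entries at i and j for small powers
  have hzero : ∀ m, m ≤ K - 1 → ∀ x, (x = i ∨ x = j) → ((G.adjMatrix ℝ) ^ m) k x = 0 := by
    intro m hm x hx
    rw [SimpleGraph.adjMatrix_pow_apply_eq_card_walk]
    norm_cast
    rw [Fintype.card_eq_zero_iff]
    constructor
    rintro ⟨w, hw⟩
    have hlen : w.length = m := hw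
    have := hwalk x w (by omega)
    rcases hx with rfl | rfl
    · exact this.1 rfl
    · exact this.2 rfl
  have key : ∀ m, m ≤ K → ∀ l, ((G.adjMatrix ℝ) ^ m) k l = ((G'.adjMatrix ℝ) ^ m) k l := by
    intro m
    induction m with
    | zero => intro _ l; rfl
    | succ m ih =>
      intro hm l
      rw [pow_succ, pow_succ, Matrix.mul_apply, Matrix.mul_apply]
      apply Finset.sum_congr rfl
      intro x _
      by_cases hx : x = i ∨ x = j
      · have h0 : ((G.adjMatrix ℝ) ^ m) k x = 0 := hzero m (by omega) x hx
        rw [ih (by omega) x] at h0 ⊢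
        simp [h0]
      · push_neg at hx
        rw [ih (by omega) x]
        congr 1
        have : G'.Adj x l ↔ G.Adj x l := by
          subst hG'
          simp only [SimpleGraph.deleteEdges_adj, Set.mem_singleton_iff, Sym2.eq, Sym2.rel_iff',
            Prod.mk.injEq, Prod.swap_prod_mk]
          constructor
          · exact fun h => h.1
          · intro h
            refine ⟨h, ?_⟩
            rintro (⟨rfl, rfl⟩ | ⟨rfl, rfl⟩)
            · exact hx.1 rfl
            · exact hx.2 rfl
        simp only [SimpleGraph.adjMatrix_apply, this]
  exact key K le_rfl
end
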